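/- arXiv:math/0602419 — 6 statements merged into one kernel-verified Lean document; each statement's English description precedes it below -/
import Mathlib

section
/- If the sphere S^h can be covered by n open sets, none containing a pair of antipodal points, such that every point of S^h lies in at most l of the sets, then S^{h+1} can be covered by n+1 open sets, none containing a pair of antipodal points, such that every point of S^{h+1} lies in at most l+1 of the sets. -/
/-!
Write a point of `S^{h+1}` as `(y, s)` with `y ∈ ℝ^{h+1}` and `s ∈ ℝ`. Off the poles it lies over
the point `y / ‖y‖` of `S^h`, and this radial projection commutes with the antipodal map. So each
`U j` lifts to the open set of points with `s < 1/2` lying over `U j`: the lifts are antipode-free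
and at most `l` of them meet at any point. The open upper hemisphere `s > 0` is the new set, and
the south polar cap `s < -1/2` is merged into one of the lifts; the cutoff `s < 1/2` keeps that
lift antipode-free. No point lies in both the hemisphere and the cap, so the multiplicity grows by
at most one. Below, `y` and `s` are the values of continuous linear maps `p` and `t`.
-/

open Metric Set
open NormedSpace (norm_normalize_eq_one_iff normalize_neg)

structure IsAntipodeFreeCover {E ι : Type*} [TopologicalSpace E] [Neg E]
    (S : Set E) (U : ι → Set E) (l : ℕ) : Prop where
  relOpen : ∀ i, ∃ V, IsOpen V ∧ U i = V ∩ S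
  subset_iUnion : S ⊆ ⋃ i, U i
  neg_notMem : ∀ i, ∀ x ∈ U i, -x ∉ U i
  ncard_le : ∀ x ∈ S, {i | x ∈ U i}.ncard ≤ l

theorem IsAntipodeFreeCover.nonempty {E ι : Type*} [TopologicalSpace E] [Neg E] {S : Set E}
    {U : ι → Set E} {l : ℕ} (hU : IsAntipodeFreeCover S U l) (hS : S.Nonempty) : Nonempty ι := by
  obtain ⟨x, hx⟩ := hS
  obtain ⟨i, -⟩ := mem_iUnion.mp (hU.subset_iUnion hx)
  exact ⟨i⟩

theorem continuousOn_normalize {F : Type*} [NormedAddCommGroup F] [NormedSpace ℝ F] :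
    ContinuousOn (NormedSpace.normalize : F → F) {0}ᶜ :=
  (continuousOn_id.norm.inv₀ fun _ hx => norm_ne_zero_iff.mpr hx).smul continuousOn_id

section Lift

variable {E F : Type*} [NormedAddCommGroup E] [NormedSpace ℝ E] [NormedAddCommGroup F]
  [NormedSpace ℝ F] (p : E →L[ℝ] F) (t : E →L[ℝ] ℝ)

def liftSet (U : Set F) : Set E := {x | t x < 1 / 2 ∧ p x ≠ 0 ∧ NormedSpace.normalize (p x) ∈ U}

def liftedCover {n : ℕ} (U : Fin n → Set F) (i₀ : Fin n) : Fin (n + 1) → Set E :=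
  Fin.snoc (fun j => {x | x ∈ liftSet p t (U j) ∨ (j = i₀ ∧ t x < -1 / 2)}) {x | 0 < t x}

variable {p t}

theorem isOpen_liftSet {U : Set F} (hU : ∃ V, IsOpen V ∧ U = V ∩ sphere 0 1) :
    IsOpen (liftSet p t U) := by
  obtain ⟨V, hV, rfl⟩ := hU
  have hcont : ContinuousOn (NormedSpace.normalize ∘ p) (p ⁻¹' {0}ᶜ) :=
    continuousOn_normalize.comp p.continuous.continuousOn fun _ hx => hx
  have hopen := hcont.isOpen_inter_preimage (isOpen_compl_singleton.preimage p.continuous) hV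
  have hlow : IsOpen {x | t x < 1 / 2} := isOpen_lt t.continuous continuous_const
  convert hlow.inter hopen using 1
  ext x
  simp +contextual [liftSet, norm_normalize_eq_one_iff]

theorem neg_notMem_liftSet {U : Set F} (hU : ∀ y ∈ U, -y ∉ U) {x : E} (hx : x ∈ liftSet p t U) :
    -x ∉ liftSet p t U := fun hnx => hU _ hx.2.2 (by simpa [normalize_neg] using hnx.2.2)

theorem ncard_liftSet_le {n l : ℕ} {U : Fin n → Set F}
    (hU : ∀ y ∈ sphere (0 : F) 1, {j | y ∈ U j}.ncard ≤ l) (x : E) :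
    {j | x ∈ liftSet p t (U j)}.ncard ≤ l := by
  by_cases hx : p x = 0
  · simp [liftSet, hx]
  · exact (ncard_le_ncard (fun j hj => hj.2.2) (toFinite _)).trans
      (hU _ (mem_sphere_zero_iff_norm.mpr (norm_normalize_eq_one_iff.mpr hx)))

variable {n : ℕ} {U : Fin n → Set F} {i₀ : Fin n}

theorem mem_liftedCover_castSucc {j : Fin n} {x : E} :
    x ∈ liftedCover p t U i₀ j.castSucc ↔ x ∈ liftSet p t (U j) ∨ (j = i₀ ∧ t x < -1 / 2) := by
  simp [liftedCover]

theorem mem_liftedCover_last {x : E} : x ∈ liftedCover p t U i₀ (Fin.last n) ↔ 0 < t x := by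
  simp [liftedCover]

theorem isOpen_liftedCover (hU : ∀ j, ∃ V, IsOpen V ∧ U j = V ∩ sphere 0 1) (i : Fin (n + 1)) :
    IsOpen (liftedCover p t U i₀ i) := by
  induction i using Fin.lastCases with
  | last => simpa [liftedCover] using isOpen_lt continuous_const t.continuous
  | cast j =>
    have hcap : IsOpen {x : E | j = i₀ ∧ t x < -1 / 2} := by
      by_cases hj : j = i₀ <;> simp [hj, isOpen_lt t.continuous continuous_const]
    simp only [liftedCover, Fin.snoc_castSucc]
    exact (isOpen_liftSet (hU j)).union hcap

theorem neg_notMem_liftedCover (hU : ∀ j, ∀ y ∈ U j, -y ∉ U j) (i : Fin (n + 1)) {x : E}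
    (hx : x ∈ liftedCover p t U i₀ i) : -x ∉ liftedCover p t U i₀ i := by
  induction i using Fin.lastCases with
  | last =>
    rw [mem_liftedCover_last] at hx ⊢
    simpa using hx.le
  | cast j =>
    rw [mem_liftedCover_castSucc] at hx ⊢
    rintro (hnx | ⟨-, hnx⟩) <;> rcases hx with hx | ⟨-, hx⟩
    · exact neg_notMem_liftSet (hU j) hx hnx
    · linarith [hnx.1, map_neg t x]
    · linarith [hx.1, map_neg t x]
    · linarith [map_neg t x]

theorem sphere_subset_iUnion_liftedCover (hU : sphere (0 : F) 1 ⊆ ⋃ j, U j)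
    (hpole : ∀ x ∈ sphere (0 : E) 1, p x = 0 → |t x| = 1) :
    sphere (0 : E) 1 ⊆ ⋃ i, liftedCover p t U i₀ i := by
  intro x hx
  rw [mem_iUnion]
  by_cases hup : 0 < t x
  · exact ⟨Fin.last n, mem_liftedCover_last.mpr hup⟩
  push Not at hup
  by_cases hp : p x = 0
  · refine ⟨i₀.castSucc, mem_liftedCover_castSucc.mpr (Or.inr ⟨rfl, ?_⟩)⟩
    have := hpole x hx hp
    rw [abs_of_nonpos hup] at this
    linarith
  · obtain ⟨j, hj⟩ := mem_iUnion.mp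
      (hU (mem_sphere_zero_iff_norm.mpr (norm_normalize_eq_one_iff.mpr hp)))
    exact ⟨j.castSucc, mem_liftedCover_castSucc.mpr (Or.inl ⟨by linarith, hp, hj⟩)⟩

theorem ncard_liftedCover_le {l : ℕ} (hU : ∀ y ∈ sphere (0 : F) 1, {j | y ∈ U j}.ncard ≤ l)
    (x : E) : {i | x ∈ liftedCover p t U i₀ i}.ncard ≤ l + 1 := by
  have hsub : {i | x ∈ liftedCover p t U i₀ i} ⊆
      insert (if 0 < t x then Fin.last n else i₀.castSucc)
        (Fin.castSucc '' {j | x ∈ liftSet p t (U j)}) := by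
    intro i hi
    induction i using Fin.lastCases with
    | last => simp [mem_liftedCover_last.mp hi]
    | cast j =>
      rcases mem_liftedCover_castSucc.mp hi with hj | ⟨rfl, hcap⟩
      · exact mem_insert_of_mem _ ⟨j, hj, rfl⟩
      · simp [show ¬0 < t x by linarith]
  calc {i | x ∈ liftedCover p t U i₀ i}.ncard
      ≤ (insert _ (Fin.castSucc '' {j | x ∈ liftSet p t (U j)})).ncard :=
        ncard_le_ncard hsub (toFinite _)
    _ ≤ {j | x ∈ liftSet p t (U j)}.ncard + 1 := by
        rw [← ncard_image_of_injective _ (Fin.castSucc_injective n)]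
        exact ncard_insert_le _ _
    _ ≤ l + 1 := by grw [ncard_liftSet_le hU x]

theorem IsAntipodeFreeCover.lift {l : ℕ} (hU : IsAntipodeFreeCover (sphere (0 : F) 1) U l)
    (hpole : ∀ x ∈ sphere (0 : E) 1, p x = 0 → |t x| = 1) (i₀ : Fin n) :
    IsAntipodeFreeCover (sphere (0 : E) 1) (fun i => liftedCover p t U i₀ i ∩ sphere 0 1)
      (l + 1) where
  relOpen i := ⟨_, isOpen_liftedCover hU.relOpen i, rfl⟩
  subset_iUnion x hx := by
    obtain ⟨i, hi⟩ := mem_iUnion.mp (sphere_subset_iUnion_liftedCover hU.subset_iUnion hpole hx)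
    exact mem_iUnion.mpr ⟨i, hi, hx⟩
  neg_notMem i _ hx hnx := neg_notMem_liftedCover hU.neg_notMem i hx.1 hnx.1
  ncard_le x _ := (ncard_le_ncard (fun _ hi => hi.1) (toFinite _)).trans
    (ncard_liftedCover_le hU.ncard_le x)

end Lift

namespace EuclideanSpace

noncomputable def dropLast (k : ℕ) :
    EuclideanSpace ℝ (Fin (k + 1)) →L[ℝ] EuclideanSpace ℝ (Fin k) :=
  LinearMap.toContinuousLinearMap <| (WithLp.linearEquiv 2 ℝ (Fin k → ℝ)).symm.toLinearMap ∘ₗ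
    LinearMap.funLeft ℝ ℝ Fin.castSucc ∘ₗ (WithLp.linearEquiv 2 ℝ (Fin (k + 1) → ℝ)).toLinearMap

theorem dropLast_apply {k : ℕ} (x : EuclideanSpace ℝ (Fin (k + 1))) (i : Fin k) :
    dropLast k x i = x i.castSucc := rfl

theorem norm_sq_eq_norm_dropLast_sq_add {k : ℕ} (x : EuclideanSpace ℝ (Fin (k + 1))) :
    ‖x‖ ^ 2 = ‖dropLast k x‖ ^ 2 + x (Fin.last k) ^ 2 := by
  simp [norm_sq_eq, Fin.sum_univ_castSucc, dropLast_apply]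

theorem abs_proj_last_eq_one_of_dropLast_eq_zero {k : ℕ} {x : EuclideanSpace ℝ (Fin (k + 1))}
    (hx : x ∈ sphere 0 1) (h0 : dropLast k x = 0) :
    |proj (Fin.last k) x| = 1 := by
  have hsq := norm_sq_eq_norm_dropLast_sq_add x
  rw [mem_sphere_zero_iff_norm.mp hx, h0, norm_zero] at hsq
  simpa using (sq_eq_sq_iff_abs_eq_abs _ (1 : ℝ)).mp (by linarith)

end EuclideanSpace

/-- If the sphere `S^h` can be covered by `n` open sets, none containing a pair of
antipodal points, with every point in at most `l` of the sets, then `S^{h+1}` can be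
covered by `n+1` open sets, none containing a pair of antipodal points, with every
point in at most `l+1` of the sets. -/
theorem cover_step (h l n : ℕ)
    (hex : ∃ U : Fin n → Set (EuclideanSpace ℝ (Fin (h + 1))),
      (∀ i, ∃ V, IsOpen V ∧ U i = V ∩ Metric.sphere 0 1) ∧
      (Metric.sphere (0 : EuclideanSpace ℝ (Fin (h + 1))) 1 ⊆ ⋃ i, U i) ∧
      (∀ i, ∀ x, x ∈ U i → -x ∉ U i) ∧
      (∀ x ∈ Metric.sphere (0 : EuclideanSpace ℝ (Fin (h + 1))) 1,
        {i : Fin n | x ∈ U i}.ncard ≤ l)) :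
    ∃ W : Fin (n + 1) → Set (EuclideanSpace ℝ (Fin (h + 2))),
      (∀ i, ∃ V, IsOpen V ∧ W i = V ∩ Metric.sphere 0 1) ∧
      (Metric.sphere (0 : EuclideanSpace ℝ (Fin (h + 2))) 1 ⊆ ⋃ i, W i) ∧
      (∀ i, ∀ x, x ∈ W i → -x ∉ W i) ∧
      (∀ x ∈ Metric.sphere (0 : EuclideanSpace ℝ (Fin (h + 2))) 1,
        {i : Fin (n + 1) | x ∈ W i}.ncard ≤ l + 1) := by
  obtain ⟨U, hopen, hcov, hanti, hmult⟩ := hex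
  have hU : IsAntipodeFreeCover (sphere 0 1) U l := ⟨hopen, hcov, hanti, hmult⟩
  obtain ⟨i₀⟩ := hU.nonempty (NormedSpace.sphere_nonempty.mpr zero_le_one)
  obtain ⟨hW₁, hW₂, hW₃, hW₄⟩ :=
    hU.lift (fun _ => EuclideanSpace.abs_proj_last_eq_one_of_dropLast_eq_zero) i₀
  exact ⟨_, hW₁, hW₂, hW₃, hW₄⟩
end

section
/- The odd-dimensional sphere S^{2k-1} can be covered by 2k+2 open sets, none containing a pair of antipodal points, such that every point of the sphere is contained in at most k+1 of the sets. -/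
/-!
For odd continuous functions `f₀, …, f_{2m-1}`, let `U_a` be the set of points `x` at which at
most `m` of the values `f_b x` are `≥ f_a x`. These sets are open; `x` lies in at most `m` of
them, since the one among them with the smallest value already bounds that count; and no `U_a`
contains both `x` and `-x`, since by oddness the indices would split into two sets of size at
most `m` that both contain `a`. They cover every point at which the maximum of the `f_b` is
attained at most `m` times.

On `S^{2k-1}` take the `2k` coordinates and the zero function, and `m = k + 1`. The closed set
`B` where their maximum is attained at least `k + 1` times misses `-B`: at a point of both, the
maximizers and the minimizers would be disjoint (the values are not all equal, as `x ≠ 0`) sets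
of size `k + 1` among `2k + 1` indices. With an Urysohn function `φ` that is `1` on `B` and `0`
on `-B`, the odd function `2 (φ x - φ (-x))` exceeds every coordinate on `B`, so it completes the
family to `2k + 2` functions whose maximum is never attained more than `k + 1` times.
-/

open Finset

section Maximizers

variable {ι : Type*} [Fintype ι]

noncomputable def maximizers (v : ι → ℝ) : Finset ι := {i | ∀ j, v j ≤ v i}

lemma mem_maximizers {v : ι → ℝ} {i : ι} : i ∈ maximizers v ↔ ∀ j, v j ≤ v i := by
  simp [maximizers]

lemma eq_of_mem_maximizers_of_mem_maximizers_neg {v : ι → ℝ} {i : ι}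
    (hi : i ∈ maximizers v) (hi' : i ∈ maximizers (-v)) (j : ι) : v j = v i := by
  rw [mem_maximizers] at hi hi'
  linarith [hi j, hi' j, Pi.neg_apply v j, Pi.neg_apply v i]

lemma card_maximizers_le_card_maximizers_tail_add_one {n : ℕ} (v : Fin (n + 1) → ℝ) :
    #(maximizers v) ≤ #(maximizers (Fin.tail v)) + 1 := by
  have hsub : maximizers v ⊆ insert 0 ((maximizers (Fin.tail v)).map (Fin.succEmb n)) := by
    intro i hi
    rw [mem_maximizers] at hi
    cases i using Fin.cases with
    | zero => exact mem_insert_self _ _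
    | succ i =>
      exact mem_insert_of_mem (mem_map_of_mem _ (mem_maximizers.2 fun j => hi j.succ))
  calc #(maximizers v) ≤ _ := Finset.card_le_card hsub
    _ ≤ _ := card_insert_le _ _
    _ = _ := by rw [card_map]

lemma card_maximizers_le_one_of_succ_lt_zero {n : ℕ} {v : Fin (n + 1) → ℝ}
    (h : ∀ i : Fin n, v i.succ < v 0) : #(maximizers v) ≤ 1 := by
  have hsub : maximizers v ⊆ {0} := fun i hi => by
    cases i using Fin.cases with
    | zero => exact mem_singleton_self _
    | succ i => exact absurd (mem_maximizers.1 hi 0) (h i).not_ge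
  simpa using Finset.card_le_card hsub

end Maximizers

section TopRank

variable {X ι : Type*} [Fintype ι]

def topRankSet (f : ι → X → ℝ) (m : ℕ) (a : ι) : Set X := {x | #{b | f a x ≤ f b x} ≤ m}

variable {f : ι → X → ℝ} {m : ℕ}

lemma topRankSet_eq_iUnion (a : ι) :
    topRankSet f m a = ⋃ T : Finset ι, ⋃ (_ : #T ≤ m), ⋂ b ∉ T, {x | f b x < f a x} := by
  ext x
  simp only [topRankSet, Set.mem_ofPred_eq, Set.mem_iUnion, Set.mem_iInter, exists_prop]
  constructor
  · exact fun h => ⟨_, h, fun b hb => lt_of_not_ge fun hab => hb ((mem_filter_univ _).2 hab)⟩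
  · rintro ⟨T, hT, hlt⟩
    refine le_trans (Finset.card_le_card fun b hb => ?_) hT
    by_contra hbT
    exact (hlt b hbT).not_ge ((mem_filter_univ b).1 hb)

lemma isOpen_topRankSet [TopologicalSpace X] (hf : ∀ i, Continuous (f i)) (a : ι) :
    IsOpen (topRankSet f m a) := by
  rw [topRankSet_eq_iUnion]
  exact isOpen_iUnion fun T => isOpen_iUnion fun _ => isOpen_iInter_of_finite fun b =>
    isOpen_iInter_of_finite fun _ => isOpen_lt (hf b) (hf a)

lemma neg_notMem_topRankSet [InvolutiveNeg X] (hodd : ∀ i, (f i).Odd)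
    (hm : 2 * m ≤ Fintype.card ι) {a : ι} {x : X} (hx : x ∈ topRankSet f m a) :
    -x ∉ topRankSet f m a := by
  classical
  intro hnx
  set A : Finset ι := {b | f a x ≤ f b x}
  set B : Finset ι := {b | f b x ≤ f a x}
  have hA : #A ≤ m := hx
  have hB : #B ≤ m := by
    simpa only [topRankSet, Set.mem_ofPred_eq, fun i => hodd i x, neg_le_neg_iff] using hnx
  have hunion : A ∪ B = univ :=
    eq_univ_of_forall fun b => by simpa [A, B] using le_total (f a x) (f b x)
  have hinter : (A ∩ B).Nonempty := ⟨a, by simp [A, B]⟩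
  have := card_union_add_card_inter A B
  rw [hunion, card_univ] at this
  have := hinter.card_pos
  omega

lemma ncard_setOf_mem_topRankSet_le (x : X) : {a | x ∈ topRankSet f m a}.ncard ≤ m := by
  obtain hW | hW := {a | x ∈ topRankSet f m a}.eq_empty_or_nonempty
  · simp [hW]
  obtain ⟨a₀, ha₀, hmin⟩ := Set.exists_min_image _ (fun a => f a x) (Set.toFinite _) hW
  calc {a | x ∈ topRankSet f m a}.ncard
      ≤ (({b | f a₀ x ≤ f b x} : Finset ι) : Set ι).ncard :=
        Set.ncard_le_ncard fun b hb => by simpa using hmin b hb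
    _ ≤ m := by rw [Set.ncard_coe_finset]; exact ha₀

lemma mem_topRankSet_of_mem_maximizers {x : X} {a : ι} (ha : a ∈ maximizers fun i => f i x)
    (hm : #(maximizers fun i => f i x) ≤ m) : x ∈ topRankSet f m a := by
  refine le_trans (Finset.card_le_card fun b hb => ?_) hm
  rw [mem_maximizers] at ha ⊢
  exact fun j => (ha j).trans ((mem_filter_univ b).1 hb)

end TopRank

theorem exists_open_antipodeFree_cover {X ι : Type*} [TopologicalSpace X] [InvolutiveNeg X]
    [Fintype ι] [Nonempty ι] {f : ι → X → ℝ} (hf : ∀ i, Continuous (f i))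
    (hodd : ∀ i, (f i).Odd) {m : ℕ} (hm : 2 * m ≤ Fintype.card ι) {S : Set X}
    (hS : ∀ x ∈ S, #(maximizers fun i => f i x) ≤ m) :
    ∃ U : ι → Set X, (∀ i, IsOpen (U i)) ∧ S ⊆ ⋃ i, U i ∧ (∀ i x, x ∈ U i → -x ∉ U i) ∧
      ∀ x, {i | x ∈ U i}.ncard ≤ m := by
  refine ⟨topRankSet f m, isOpen_topRankSet hf, fun x hx => ?_,
    fun _ _ => neg_notMem_topRankSet hodd hm, ncard_setOf_mem_topRankSet_le⟩
  obtain ⟨a, -, ha⟩ := exists_max_image univ (fun i => f i x) univ_nonempty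
  exact Set.mem_iUnion.2 ⟨a, mem_topRankSet_of_mem_maximizers
    (mem_maximizers.2 fun j => ha j (mem_univ j)) (hS x hx)⟩

section TieBreaking

variable {X ι : Type*} [TopologicalSpace X] [Fintype ι]

lemma isClosed_setOf_le_card_maximizers {g : ι → X → ℝ} (hg : ∀ i, Continuous (g i)) (m : ℕ) :
    IsClosed {x | m ≤ #(maximizers fun i => g i x)} := by
  have : {x | m ≤ #(maximizers fun i => g i x)} =
      ⋃ T : Finset ι, ⋃ (_ : m ≤ #T), ⋂ i ∈ T, ⋂ j, {x | g j x ≤ g i x} := by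
    ext x
    simp only [Set.mem_ofPred_eq, Set.mem_iUnion, Set.mem_iInter, exists_prop]
    constructor
    · exact fun h => ⟨_, h, fun i hi => mem_maximizers.1 hi⟩
    · rintro ⟨T, hT, hle⟩
      exact hT.trans (Finset.card_le_card fun i hi => mem_maximizers.2 (hle i hi))
  rw [this]
  exact isClosed_iUnion_of_finite fun T => isClosed_iUnion_of_finite fun _ =>
    isClosed_biInter fun i _ => isClosed_iInter fun j => isClosed_le (hg j) (hg i)

lemma card_maximizers_neg_lt {m : ℕ} (hm : Fintype.card ι < 2 * m) {v : ι → ℝ}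
    (hne : ∃ i j, v i ≠ v j) (hv : m ≤ #(maximizers v)) : #(maximizers (-v)) < m := by
  classical
  have hdisj : Disjoint (maximizers v) (maximizers (-v)) := by
    refine disjoint_left.2 fun i hi hi' => ?_
    obtain ⟨j, l, hjl⟩ := hne
    exact hjl ((eq_of_mem_maximizers_of_mem_maximizers_neg hi hi' j).trans
      (eq_of_mem_maximizers_of_mem_maximizers_neg hi hi' l).symm)
  have := card_union_of_disjoint hdisj ▸ card_le_univ (maximizers v ∪ maximizers (-v))
  omega

theorem exists_odd_family_card_maximizers_le [NormalSpace X] [InvolutiveNeg X] [ContinuousNeg X]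
    {n m : ℕ} (hnm : n < 2 * m) {g : Fin n → X → ℝ} (hg : ∀ i, Continuous (g i))
    (hodd : ∀ i, (g i).Odd) {S : Set X} (hS : IsClosed S) {C : ℝ}
    (hC : ∀ x ∈ S, ∀ i, g i x < C) (hne : ∀ x ∈ S, ∃ i j, g i x ≠ g j x) :
    ∃ F : Fin (n + 1) → X → ℝ, (∀ i, Continuous (F i)) ∧ (∀ i, (F i).Odd) ∧
      ∀ x ∈ S, #(maximizers fun i => F i x) ≤ m := by
  set B := S ∩ {x | m ≤ #(maximizers fun i => g i x)}
  have hB : IsClosed B := hS.inter (isClosed_setOf_le_card_maximizers hg m)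
  have hmax_neg (x : X) : (maximizers fun i => g i (-x)) = maximizers (-fun i => g i x) := by
    simp only [fun i => hodd i x]; rfl
  have hdisj : Disjoint (Neg.neg ⁻¹' B) B := by
    refine Set.disjoint_left.2 fun x hnx hx => ?_
    have := card_maximizers_neg_lt (by simpa using hnm) (hne x hx.1) hx.2
    exact this.not_ge (hmax_neg x ▸ hnx.2)
  obtain ⟨φ, hφ0, hφ1, -⟩ :=
    exists_continuous_zero_one_of_isClosed (hB.preimage continuous_neg) hB hdisj
  set D : X → ℝ := fun x => C * (φ x - φ (-x))
  have hDc : Continuous D :=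
    continuous_const.mul (φ.continuous.sub (φ.continuous.comp continuous_neg))
  have hDodd : D.Odd := fun x => by
    simp only [D, neg_neg]
    ring
  refine ⟨Fin.cons D g, Fin.cases hDc hg, Fin.cases hDodd hodd, fun x hx => ?_⟩
  by_cases hx' : m ≤ #(maximizers fun i => g i x)
  · have hxB : x ∈ B := ⟨hx, hx'⟩
    have hDx : D x = C := by
      have hnx : -x ∈ Neg.neg ⁻¹' B := by rwa [Set.mem_preimage, neg_neg]
      simp [D, hφ1 hxB, hφ0 hnx]
    have := card_maximizers_le_one_of_succ_lt_zero
      (v := fun i => (Fin.cons D g : Fin (n + 1) → X → ℝ) i x) (by simpa [hDx] using hC x hx)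
    omega
  · have : #(maximizers fun i => (Fin.cons D g : Fin (n + 1) → X → ℝ) i x) ≤
        #(maximizers fun i => g i x) + 1 :=
      card_maximizers_le_card_maximizers_tail_add_one _
    omega

end TieBreaking

section Coordinates

variable {n : ℕ}

noncomputable def coordsAndZero (n : ℕ) : Fin (n + 1) → EuclideanSpace ℝ (Fin n) → ℝ :=
  Fin.cons 0 fun i x => x i

lemma continuous_coordsAndZero (i : Fin (n + 1)) : Continuous (coordsAndZero n i) :=
  Fin.cases continuous_const (fun j => (EuclideanSpace.proj j).continuous) i

lemma odd_coordsAndZero (i : Fin (n + 1)) : (coordsAndZero n i).Odd :=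
  Fin.cases (fun _ => by simp [coordsAndZero]) (fun _ _ => rfl) i

lemma coordsAndZero_le_norm (x : EuclideanSpace ℝ (Fin n)) (i : Fin (n + 1)) :
    coordsAndZero n i x ≤ ‖x‖ :=
  Fin.cases (norm_nonneg x) (fun j => (le_abs_self _).trans (PiLp.norm_apply_le x j)) i

lemma exists_coordsAndZero_ne {x : EuclideanSpace ℝ (Fin n)} (hx : x ≠ 0) :
    ∃ i j, coordsAndZero n i x ≠ coordsAndZero n j x := by
  obtain ⟨j, hj⟩ : ∃ j, x j ≠ 0 := by
    by_contra! h
    exact hx (PiLp.ext h)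
  exact ⟨j.succ, 0, by simpa [coordsAndZero] using hj⟩

end Coordinates

theorem odd_sphere_cover_general (k : ℕ) :
    ∃ U : Fin (2 * k + 2) → Set (EuclideanSpace ℝ (Fin (2 * k))),
      (∀ i, ∃ V, IsOpen V ∧ U i = V ∩ Metric.sphere 0 1) ∧
      (Metric.sphere (0 : EuclideanSpace ℝ (Fin (2 * k))) 1 ⊆ ⋃ i, U i) ∧
      (∀ i, ∀ x, x ∈ U i → -x ∉ U i) ∧
      (∀ x ∈ Metric.sphere (0 : EuclideanSpace ℝ (Fin (2 * k))) 1,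
        {i : Fin (2 * k + 2) | x ∈ U i}.ncard ≤ k + 1) := by
  obtain ⟨F, hFc, hFodd, hties⟩ := exists_odd_family_card_maximizers_le
    (g := coordsAndZero (2 * k)) (m := k + 1) (C := 2) (by omega) continuous_coordsAndZero
    odd_coordsAndZero Metric.isClosed_sphere
    (fun x hx i => (coordsAndZero_le_norm x i).trans_lt (by simp [mem_sphere_zero_iff_norm.1 hx]))
    (fun x hx => exists_coordsAndZero_ne (Metric.ne_of_mem_sphere hx one_ne_zero))
  obtain ⟨U, hUo, hcov, hanti, hmult⟩ :=
    exists_open_antipodeFree_cover hFc hFodd (by rw [Fintype.card_fin]; omega) hties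
  refine ⟨fun i => U i ∩ Metric.sphere 0 1, fun i => ⟨U i, hUo i, rfl⟩, fun x hx => ?_,
    fun i x hx hnx => hanti i x hx.1 hnx.1,
    fun x _ => (Set.ncard_le_ncard fun i hi => hi.1).trans (hmult x)⟩
  obtain ⟨i, hi⟩ := Set.mem_iUnion.1 (hcov hx)
  exact Set.mem_iUnion.2 ⟨i, hi, hx⟩

/-- The odd-dimensional sphere `S^{2k-1}` (the unit sphere in `ℝ^{2k}`, `k ≥ 1`)
can be covered by `2k+2` open sets, none containing a pair of antipodal points,
such that every point of the sphere is in at most `k+1` of the sets. -/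
theorem odd_sphere_cover (k : ℕ) (hk : 1 ≤ k) :
    ∃ U : Fin (2 * k + 2) → Set (EuclideanSpace ℝ (Fin (2 * k))),
      (∀ i, ∃ V, IsOpen V ∧ U i = V ∩ Metric.sphere 0 1) ∧
      (Metric.sphere (0 : EuclideanSpace ℝ (Fin (2 * k))) 1 ⊆ ⋃ i, U i) ∧
      (∀ i, ∀ x, x ∈ U i → -x ∉ U i) ∧
      (∀ x ∈ Metric.sphere (0 : EuclideanSpace ℝ (Fin (2 * k))) 1,
        {i : Fin (2 * k + 2) | x ∈ U i}.ncard ≤ k + 1) :=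
  odd_sphere_cover_general k
end

section
/- The circle S^1 can be covered by 3 open sets, none containing a pair of antipodal points, such that every point of S^1 is contained in at most 2 of the sets. -/
/-!
Take the three unit vectors `v₀, v₁, v₂` at angles `0, 2π/3, 4π/3` and let `U i` be the cap of
the circle where `⟪vᵢ, x⟫ > 1/4`. A cap lying in an open half-space `⟪v, x⟫ > c` with `c ≥ 0`
contains no antipodal pair. Since `v₀ + v₁ + v₂ = 0`, the three inner products sum to zero, so
no point lies in all three caps. Conversely, if all three were `≤ 1/4` while summing to zero, each
would lie in `[-1/2, 1/4]`, forcing their sum of squares to be at most `3/8`; but that sum is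
`3/2` on the unit circle.
-/

open Metric Set
open scoped RealInnerProductSpace

theorem sq_add_sq_add_sq_le_of_add_add_eq_zero {a b c d : ℝ} (h : a + b + c = 0)
    (ha : a ≤ d) (hb : b ≤ d) (hc : c ≤ d) : a ^ 2 + b ^ 2 + c ^ 2 ≤ 6 * d ^ 2 := by
  -- each term lies in `[-2d, d]`, and `(d - t) (t + 2d) ≥ 0` sums to the claim
  nlinarith [mul_nonneg (sub_nonneg.2 ha) (by linarith : 0 ≤ a + 2 * d),
    mul_nonneg (sub_nonneg.2 hb) (by linarith : 0 ≤ b + 2 * d),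
    mul_nonneg (sub_nonneg.2 hc) (by linarith : 0 ≤ c + 2 * d)]

section HalfSpace

variable {E : Type*} [NormedAddCommGroup E] [InnerProductSpace ℝ E]

def openHalfSpace (v : E) (c : ℝ) : Set E := {x | c < ⟪v, x⟫}

theorem isOpen_openHalfSpace (v : E) (c : ℝ) : IsOpen (openHalfSpace v c) :=
  isOpen_lt continuous_const (continuous_const.inner continuous_id)

theorem neg_notMem_openHalfSpace {v x : E} {c : ℝ} (hc : 0 ≤ c) (hx : x ∈ openHalfSpace v c) :
    -x ∉ openHalfSpace v c := by
  simp only [openHalfSpace, mem_ofPred_eq, inner_neg_right, not_lt] at hx ⊢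
  linarith

theorem sum_inner_eq_zero {ι : Type*} [Fintype ι] {v : ι → E} (hv : ∑ i, v i = 0) (x : E) :
    ∑ i, ⟪v i, x⟫ = 0 := by
  rw [← sum_inner, hv, inner_zero_left]

theorem exists_notMem_openHalfSpace {ι : Type*} [Fintype ι] [Nonempty ι] {v : ι → E}
    (hv : ∑ i, v i = 0) {c : ℝ} (hc : 0 ≤ c) (x : E) : ∃ i, x ∉ openHalfSpace (v i) c := by
  by_contra! h
  have hpos : 0 < ∑ i, ⟪v i, x⟫ :=
    Finset.sum_pos (fun i _ ↦ hc.trans_lt (h i)) Finset.univ_nonempty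
  exact hpos.ne' (sum_inner_eq_zero hv x)

theorem exists_mem_openHalfSpace {v : Fin 3 → E} (hv : ∑ i, v i = 0) {c : ℝ} {x : E}
    (hx : 6 * c ^ 2 < ∑ i, ⟪v i, x⟫ ^ 2) : ∃ i, x ∈ openHalfSpace (v i) c := by
  by_contra! h
  simp only [openHalfSpace, mem_ofPred_eq, not_lt] at h
  have hsum := sum_inner_eq_zero hv x
  rw [Fin.sum_univ_three] at hsum hx
  exact hx.not_ge (sq_add_sq_add_sq_le_of_add_add_eq_zero hsum (h 0) (h 1) (h 2))

end HalfSpace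

noncomputable def triad : Fin 3 → EuclideanSpace ℝ (Fin 2) :=
  ![!₂[1, 0], !₂[-1 / 2, √3 / 2], !₂[-1 / 2, -(√3 / 2)]]

theorem sum_triad : ∑ i, triad i = 0 := by
  ext j
  fin_cases j <;> simp [triad, Fin.sum_univ_three]; norm_num

theorem sum_inner_triad_sq (x : EuclideanSpace ℝ (Fin 2)) :
    ∑ i, ⟪triad i, x⟫ ^ 2 = 3 / 2 * ‖x‖ ^ 2 := by
  have h3 : √3 ^ 2 = 3 := Real.sq_sqrt (by norm_num)
  simp [triad, Fin.sum_univ_three, EuclideanSpace.norm_sq_eq, Fin.sum_univ_two, inner]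
  linear_combination (x 1 ^ 2 / 2) * h3

/-- The circle `S^1` (the unit circle in `ℝ^2`) can be covered by `3` open sets,
none containing a pair of antipodal points, such that every point of `S^1` is
contained in at most `2` of the sets. -/
theorem circle_cover :
    ∃ U : Fin 3 → Set (EuclideanSpace ℝ (Fin 2)),
      (∀ i, ∃ V, IsOpen V ∧ U i = V ∩ Metric.sphere 0 1) ∧
      (Metric.sphere (0 : EuclideanSpace ℝ (Fin 2)) 1 ⊆ ⋃ i, U i) ∧
      (∀ i, ∀ x, x ∈ U i → -x ∉ U i) ∧
      (∀ x ∈ Metric.sphere (0 : EuclideanSpace ℝ (Fin 2)) 1,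
        {i : Fin 3 | x ∈ U i}.ncard ≤ 2) := by
  let V i := openHalfSpace (triad i) (1 / 4)
  refine ⟨fun i ↦ V i ∩ sphere 0 1, fun i ↦ ⟨V i, isOpen_openHalfSpace _ _, rfl⟩, ?_, ?_, ?_⟩
  · intro x hx
    have hsq : 6 * (1 / 4 : ℝ) ^ 2 < ∑ i, ⟪triad i, x⟫ ^ 2 := by
      rw [sum_inner_triad_sq, mem_sphere_zero_iff_norm.1 hx]
      norm_num
    obtain ⟨i, hi⟩ := exists_mem_openHalfSpace sum_triad hsq
    exact mem_iUnion.2 ⟨i, hi, hx⟩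
  · rintro i x ⟨hx, -⟩ ⟨hnx, -⟩
    exact neg_notMem_openHalfSpace (by norm_num) hx hnx
  · intro x _
    obtain ⟨i, hi⟩ := exists_notMem_openHalfSpace sum_triad (by norm_num : (0 : ℝ) ≤ 1 / 4) x
    have hne : {i : Fin 3 | x ∈ V i ∩ sphere 0 1} ≠ univ :=
      ne_univ_iff_exists_notMem _ |>.2 ⟨i, fun h ↦ hi h.1⟩
    exact Nat.le_of_lt_succ (by simpa using ncard_lt_card hne)
end

section
/- The sphere S^2 can be covered by 4 open sets, none containing a pair of antipodal points, such that every point of S^2 is contained in at most 3 of the sets. -/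
/-- The sphere `S^2` (the unit sphere in `ℝ^3`) can be covered by `4` open sets,
none containing a pair of antipodal points, such that every point of `S^2` is
contained in at most `3` of the sets. -/
theorem two_sphere_cover :
    ∃ U : Fin 4 → Set (EuclideanSpace ℝ (Fin 3)),
      (∀ i, ∃ V, IsOpen V ∧ U i = V ∩ Metric.sphere 0 1) ∧
      (Metric.sphere (0 : EuclideanSpace ℝ (Fin 3)) 1 ⊆ ⋃ i, U i) ∧
      (∀ i, ∀ x, x ∈ U i → -x ∉ U i) ∧
      (∀ x ∈ Metric.sphere (0 : EuclideanSpace ℝ (Fin 3)) 1,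
        {i : Fin 4 | x ∈ U i}.ncard ≤ 3) := by
  classical
  set g : Fin 4 → (EuclideanSpace ℝ (Fin 3) → ℝ) :=
    ![fun x => x 0 + x 1 + x 2, fun x => x 0 - x 1 - x 2,
      fun x => -x 0 + x 1 - x 2, fun x => -x 0 - x 1 + x 2] with hg
  have hcoord : ∀ j : Fin 3, Continuous (fun x : EuclideanSpace ℝ (Fin 3) => x j) :=
    fun j => (EuclideanSpace.proj j).continuous
  have hcont : ∀ i, Continuous (g i) := by
    intro i
    fin_cases i <;> simp only [hg, Matrix.cons_val_zero, Matrix.cons_val_one, Matrix.head_cons,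
      Matrix.cons_val_two, Matrix.tail_cons, Matrix.cons_val_three] <;>
      continuity
  have hsum : ∀ x : EuclideanSpace ℝ (Fin 3), g 0 x + g 1 x + g 2 x + g 3 x = 0 := by
    intro x
    simp only [hg, Matrix.cons_val_zero, Matrix.cons_val_one, Matrix.head_cons,
      Matrix.cons_val_two, Matrix.tail_cons, Matrix.cons_val_three]
    ring
  refine ⟨fun i => {x | 0 < g i x} ∩ Metric.sphere 0 1, ?_, ?_, ?_, ?_⟩
  · intro i
    exact ⟨{x | 0 < g i x}, isOpen_lt continuous_const (hcont i), rfl⟩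
  · intro x hx
    by_contra hcon
    simp only [Set.mem_iUnion, Set.mem_inter_iff, Set.mem_setOf_eq, not_exists, not_and] at hcon
    have hle : ∀ i, g i x ≤ 0 := by
      intro i
      by_contra h
      exact hcon i (lt_of_not_ge h) hx
    have h0 := hle 0; have h1 := hle 1; have h2 := hle 2; have h3 := hle 3
    simp only [hg, Matrix.cons_val_zero, Matrix.cons_val_one, Matrix.head_cons,
      Matrix.cons_val_two, Matrix.tail_cons, Matrix.cons_val_three] at h0 h1 h2 h3
    have hx0 : x 0 = 0 := by linarith
    have hx1 : x 1 = 0 := by linarith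
    have hx2 : x 2 = 0 := by linarith
    have hnorm : ‖x‖ = 1 := by simpa using hx
    have : ‖x‖ = 0 := by
      rw [EuclideanSpace.norm_eq]
      simp [Fin.sum_univ_three, hx0, hx1, hx2]
    rw [this] at hnorm
    norm_num at hnorm
  · intro i x hxU hxN
    obtain ⟨hpos, _⟩ := hxU
    obtain ⟨hneg, _⟩ := hxN
    simp only [Set.mem_setOf_eq] at hpos hneg
    have hnegval : g i (-x) = -(g i x) := by
      fin_cases i <;> simp [hg, PiLp.neg_apply] <;> ring
    rw [hnegval] at hneg
    linarith
  · intro x hx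
    have hjex : ∃ j, g j x ≤ 0 := by
      by_contra h
      push_neg at h
      have := hsum x
      have h0 := h 0; have h1 := h 1; have h2 := h 2; have h3 := h 3
      linarith
    obtain ⟨j, hj⟩ := hjex
    have hsub : {i : Fin 4 | x ∈ {x | 0 < g i x} ∩ Metric.sphere 0 1} ⊆ ({j}ᶜ : Set (Fin 4)) := by
      intro i hi
      obtain ⟨hpos, _⟩ := hi
      intro hij
      simp only [Set.mem_singleton_iff] at hij
      subst hij
      exact absurd hpos (not_lt.mpr hj)
    calc {i : Fin 4 | x ∈ {x | 0 < g i x} ∩ Metric.sphere 0 1}.ncard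
        ≤ ({j}ᶜ : Set (Fin 4)).ncard := Set.ncard_le_ncard hsub (Set.toFinite _)
      _ = 3 := by
          rw [Set.ncard_eq_toFinset_card']
          simp [Finset.card_compl]
end

section
/- For k ≥ 2, the top-dimensional (i.e., (2k-1)-dimensional) homology with Z/2 coefficients of the deleted square of the k-skeleton of the 2k-simplex vanishes, and likewise for its quotient by the factor-swapping Z/2 action. -/
open scoped Classical

/-- A cell of top dimension `2k-1` of the deleted square of the `k`-skeleton of the
`2k`-simplex (vertex set `Fin (2k+1)`): an ordered pair of disjoint faces, each with
at most `k+1` vertices, together using all `2k+1` vertices. -/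
def IsTopCell (k : ℕ) (p : Finset (Fin (2 * k + 1)) × Finset (Fin (2 * k + 1))) : Prop :=
  Disjoint p.1 p.2 ∧ p.1.card ≤ k + 1 ∧ p.2.card ≤ k + 1 ∧
    p.1.card + p.2.card = 2 * k + 1

/-- `p` is a cell of the deleted square having the codimension-one cell `(a, b)`
as a facet. -/
def HasFacet (k : ℕ) (p : Finset (Fin (2 * k + 1)) × Finset (Fin (2 * k + 1)))
    (a b : Finset (Fin (2 * k + 1))) : Prop :=
  IsTopCell k p ∧ ((a ⊆ p.1 ∧ b = p.2) ∨ (a = p.1 ∧ b ⊆ p.2))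

/-!
A top cell `(σ, τ)` uses all `2k + 1` vertices, so `τ = σᶜ` and one of the faces, say `σ`,
has `k + 1` vertices. Removing a vertex `v` from `τ` gives a codimension-one cell
`(σ, τ \ {v})`, and `(σ, τ)` is the only top cell containing it: enlarging `σ` would exceed
the dimension bound, while keeping `σ` forces the second face to be `σᶜ = τ`. Hence the
cycle condition at this facet reads `c (σ, τ) = 0`; the case `|τ| = k + 1` follows by
swapping the factors. Symmetric cycles are in particular cycles, which gives the quotient.
-/

/-- The boundary carries no signs, so this is the cycle condition only in characteristic `2`. -/
def IsTopCycle {M : Type*} [AddCommMonoid M] (k : ℕ)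
    (c : Finset (Fin (2 * k + 1)) × Finset (Fin (2 * k + 1)) → M) : Prop :=
  ∀ a b : Finset (Fin (2 * k + 1)), Disjoint a b → a.card ≤ k + 1 →
    b.card ≤ k + 1 → a.card + b.card = 2 * k →
    ∑ p ∈ Finset.univ.filter (fun p => HasFacet k p a b), c p = 0

namespace IsTopCell

variable {k : ℕ} {p : Finset (Fin (2 * k + 1)) × Finset (Fin (2 * k + 1))}

theorem snd_eq_compl (hp : IsTopCell k p) : p.2 = p.1ᶜ :=
  (Finset.compl_eq_of_disjoint_of_card_add_eq hp.1
    (by rw [Finset.card_univ, Fintype.card_fin]; exact hp.2.2.2)).symm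

theorem swap (hp : IsTopCell k p) : IsTopCell k p.swap := by
  obtain ⟨hd, h1, h2, hsum⟩ := hp
  exact ⟨hd.symm, h2, h1, by rw [Prod.fst_swap, Prod.snd_swap]; omega⟩

theorem swap_iff : IsTopCell k p.swap ↔ IsTopCell k p :=
  ⟨fun hp => by simpa using hp.swap, swap⟩

end IsTopCell

theorem hasFacet_swap_iff {k : ℕ} {p : Finset (Fin (2 * k + 1)) × Finset (Fin (2 * k + 1))}
    {a b : Finset (Fin (2 * k + 1))} : HasFacet k p.swap b a ↔ HasFacet k p a b := by
  simp only [HasFacet, IsTopCell.swap_iff, Prod.fst_swap, Prod.snd_swap]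
  tauto

theorem filter_hasFacet_erase_snd {k : ℕ}
    {p : Finset (Fin (2 * k + 1)) × Finset (Fin (2 * k + 1))} (hp : IsTopCell k p)
    (hcard : p.1.card = k + 1) {v : Fin (2 * k + 1)} (hv : v ∈ p.2) :
    Finset.univ.filter (fun q => HasFacet k q p.1 (p.2.erase v)) = {p} := by
  ext q
  simp only [Finset.mem_filter, Finset.mem_univ, true_and, Finset.mem_singleton]
  constructor
  · rintro ⟨hq, ⟨hsub, hsnd⟩ | ⟨hfst, -⟩⟩
    · -- the first face would need `k + 2` vertices
      exfalso
      obtain ⟨-, hq₁, -, hqsum⟩ := hq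
      have hle := Finset.card_le_card hsub
      have herase := Finset.card_erase_of_mem hv
      have hpos := Finset.card_pos.2 ⟨v, hv⟩
      rw [hsnd] at herase
      have := hp.2.2.2
      omega
    · exact Prod.ext hfst.symm (by rw [hq.snd_eq_compl, hp.snd_eq_compl, hfst])
  · rintro rfl
    exact ⟨hp, Or.inr ⟨rfl, Finset.erase_subset _ _⟩⟩

namespace IsTopCycle

variable {M : Type*} [AddCommMonoid M] {k : ℕ}
  {c : Finset (Fin (2 * k + 1)) × Finset (Fin (2 * k + 1)) → M}

theorem comp_swap (hc : IsTopCycle k c) : IsTopCycle k (c ∘ Prod.swap) := by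
  intro a b hab ha hb hsum
  rw [← hc b a hab.symm hb ha (by omega)]
  refine Finset.sum_equiv (Equiv.prodComm _ _) (fun q => ?_) (fun _ _ => rfl)
  simp [hasFacet_swap_iff]

theorem eq_zero_of_card_fst (hk : 1 ≤ k) (hc : IsTopCycle k c)
    {p : Finset (Fin (2 * k + 1)) × Finset (Fin (2 * k + 1))} (hp : IsTopCell k p)
    (hcard : p.1.card = k + 1) : c p = 0 := by
  obtain ⟨hd, -, hcard₂, hsum⟩ := id hp
  obtain ⟨v, hv⟩ : p.2.Nonempty := Finset.card_pos.1 (by omega)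
  have herase := Finset.card_erase_of_mem hv
  have hcycle := hc p.1 (p.2.erase v) (hd.mono_right (Finset.erase_subset v p.2))
    hcard.le (by omega) (by omega)
  rwa [filter_hasFacet_erase_snd hp hcard hv, Finset.sum_singleton] at hcycle

theorem eq_zero (hk : 1 ≤ k) (hc : IsTopCycle k c)
    {p : Finset (Fin (2 * k + 1)) × Finset (Fin (2 * k + 1))} (hp : IsTopCell k p) :
    c p = 0 := by
  obtain ⟨-, hcard₁, hcard₂, hsum⟩ := id hp
  by_cases hcard : p.1.card = k + 1
  · exact hc.eq_zero_of_card_fst hk hp hcard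
  · have hcard' : p.swap.1.card = k + 1 := by rw [Prod.fst_swap]; omega
    simpa using hc.comp_swap.eq_zero_of_card_fst hk hp.swap hcard'

end IsTopCycle

/-- For `k ≥ 2`, the top-dimensional (i.e. `(2k-1)`-dimensional) cellular homology
with `ℤ/2` coefficients of the deleted square of the `k`-skeleton of the
`2k`-simplex vanishes, and likewise for its quotient by the factor-swapping `ℤ/2`
action.  Since there are no cells of dimension `2k`, this says exactly that every
top-dimensional cellular cycle (resp. every symmetric top-dimensional cycle, these
computing the homology of the quotient) is zero. -/
theorem top_homology_of_deleted_square_vanishes (k : ℕ) (hk : 2 ≤ k) :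
    (∀ c : Finset (Fin (2 * k + 1)) × Finset (Fin (2 * k + 1)) → ZMod 2,
      (∀ a b : Finset (Fin (2 * k + 1)), Disjoint a b → a.card ≤ k + 1 →
        b.card ≤ k + 1 → a.card + b.card = 2 * k →
        ∑ p ∈ Finset.univ.filter (fun p => HasFacet k p a b), c p = 0) →
      ∀ p, IsTopCell k p → c p = 0) ∧
    (∀ c : Finset (Fin (2 * k + 1)) × Finset (Fin (2 * k + 1)) → ZMod 2,
      (∀ p, c (Prod.swap p) = c p) →
      (∀ a b : Finset (Fin (2 * k + 1)), Disjoint a b → a.card ≤ k + 1 →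
        b.card ≤ k + 1 → a.card + b.card = 2 * k →
        ∑ p ∈ Finset.univ.filter (fun p => HasFacet k p a b), c p = 0) →
      ∀ p, IsTopCell k p → c p = 0) :=
  ⟨fun _ hc _ hp => IsTopCycle.eq_zero (by omega) hc hp,
    fun _ _ hc _ hp => IsTopCycle.eq_zero (by omega) hc hp⟩
end

section
/- If there exists a continuous map g : S^h → ‖K‖ to the geometric realization of some finite simplicial complex K of dimension at most l-1 satisfying g(x) ≠ g(-x) for all x ∈ S^h, then S^h can be covered by open sets, none containing a pair of antipodal points, such that every point lies in at most l of the sets; and conversely. -/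
/-!
Given `g`, index open sets by the vertices `v` of `K`: `x` belongs to `U v` when the barycentric
coordinate of `g x` at `v` exceeds that of `g (-x)`. Barycentric coordinates are continuous on a
finite complex, so these sets are relatively open; they are antipode-free by construction, they
cover because two points with the same barycentric coordinates coincide, and `x` only lies in
`U v` for vertices `v` of the face carrying `g x`, of which there are at most `l`.

Conversely, a partition of unity subordinate to the cover maps the sphere into the geometric
realization of the nerve of the cover, whose faces have at most `l` vertices by the multiplicity
bound. For some `i` the `i`-th coordinate of the image of `x` is positive, so `x ∈ U i`, hence
`-x ∉ U i` and the `i`-th coordinate of the image of `-x` vanishes.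
-/

open Set Function Geometry

section Barycentric

variable {E : Type*} [AddCommGroup E] [Module ℝ E] {s t : Finset E} {y z : E} {w u : E → ℝ}

structure IsBarycentricCoords (s : Finset E) (y : E) (w : E → ℝ) : Prop where
  eq_zero_of_notMem : ∀ v ∉ s, w v = 0
  nonneg : ∀ v, 0 ≤ w v
  sum_eq_one : ∑ v ∈ s, w v = 1
  sum_smul_eq : ∑ v ∈ s, w v • v = y

theorem mem_convexHull_iff_exists_isBarycentricCoords :
    y ∈ convexHull ℝ (s : Set E) ↔ ∃ w, IsBarycentricCoords s y w := by
  classical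
  constructor
  · intro hy
    obtain ⟨w, hw0, hw1, hwy⟩ := Finset.mem_convexHull'.1 hy
    refine ⟨fun v => if v ∈ s then w v else 0, ⟨fun v hv => if_neg hv, fun v => ?_, ?_, ?_⟩⟩
    · split_ifs with hv
      exacts [hw0 v hv, le_rfl]
    · rwa [Finset.sum_congr rfl fun v hv => if_pos hv]
    · rwa [Finset.sum_congr rfl fun v (hv : v ∈ s) => by rw [if_pos hv]]
  · rintro ⟨w, hw⟩
    exact Finset.mem_convexHull'.2 ⟨w, fun v _ => hw.nonneg v, hw.sum_eq_one, hw.sum_smul_eq⟩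

namespace IsBarycentricCoords

theorem mono (hw : IsBarycentricCoords s y w) (hst : s ⊆ t) : IsBarycentricCoords t y w where
  eq_zero_of_notMem v hv := hw.eq_zero_of_notMem v fun h => hv (hst h)
  nonneg := hw.nonneg
  sum_eq_one := by
    rw [← Finset.sum_subset hst fun v _ hv => hw.eq_zero_of_notMem v hv, hw.sum_eq_one]
  sum_smul_eq := by
    rw [← Finset.sum_subset hst fun v _ hv => by rw [hw.eq_zero_of_notMem v hv, zero_smul],
      hw.sum_smul_eq]

theorem eq_of_forall_le (hw : IsBarycentricCoords s y w) (hu : IsBarycentricCoords s z u)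
    (hle : ∀ v ∈ s, w v ≤ u v) : w = u := by
  funext v
  by_cases hv : v ∈ s
  · exact (Finset.sum_eq_sum_iff_of_le hle).1 (hw.sum_eq_one.trans hu.sum_eq_one.symm) v hv
  · rw [hw.eq_zero_of_notMem v hv, hu.eq_zero_of_notMem v hv]

theorem linearCombination_eq (hw : IsBarycentricCoords s y w) :
    Fintype.linearCombination ℝ (fun v : s => ((v : E), (1 : ℝ))) (fun v => w v) = (y, 1) := by
  rw [Fintype.linearCombination_apply, Prod.ext_iff]
  simp only [Prod.fst_sum, Prod.snd_sum, Prod.smul_mk, smul_eq_mul, mul_one]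
  rw [Finset.sum_coe_sort s (fun v => w v • v), Finset.sum_coe_sort s w]
  exact ⟨hw.sum_smul_eq, hw.sum_eq_one⟩

end IsBarycentricCoords

theorem AffineIndependent.injective_linearCombination_prod_one
    (hs : AffineIndependent ℝ ((↑) : s → E)) :
    Injective (Fintype.linearCombination ℝ (fun v : s => ((v : E), (1 : ℝ)))) := by
  rw [← LinearMap.ker_eq_bot, LinearMap.ker_eq_bot']
  intro c hc
  rw [Fintype.linearCombination_apply, Prod.ext_iff] at hc
  simp only [Prod.fst_sum, Prod.snd_sum, Prod.smul_mk, smul_eq_mul, mul_one] at hc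
  funext v
  exact hs.eq_zero_of_sum_eq_zero hc.2 hc.1 v (Finset.mem_univ v)

theorem IsBarycentricCoords.eq_of_affineIndependent (hs : AffineIndependent ℝ ((↑) : s → E))
    (hw : IsBarycentricCoords s y w) (hu : IsBarycentricCoords s y u) : w = u := by
  funext v
  by_cases hv : v ∈ s
  · exact congrFun (hs.injective_linearCombination_prod_one
      (hw.linearCombination_eq.trans hu.linearCombination_eq.symm)) ⟨v, hv⟩
  · rw [hw.eq_zero_of_notMem v hv, hu.eq_zero_of_notMem v hv]

end Barycentric

section Continuity

variable {E : Type*} [NormedAddCommGroup E] [NormedSpace ℝ E] [FiniteDimensional ℝ E]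
  {s : Finset E}

theorem AffineIndependent.exists_continuous_barycentricCoord
    (hs : AffineIndependent ℝ ((↑) : s → E)) (v : E) :
    ∃ f : E → ℝ, Continuous f ∧ ∀ y w, IsBarycentricCoords s y w → w v = f y := by
  by_cases hv : v ∈ s
  · obtain ⟨M, hM⟩ := LinearMap.exists_leftInverse_of_injective _
      (LinearMap.ker_eq_bot.2 hs.injective_linearCombination_prod_one)
    refine ⟨fun y => M (y, 1) ⟨v, hv⟩,
      (continuous_apply _).comp ((LinearMap.continuous_of_finiteDimensional M).comp
        (continuous_id.prodMk continuous_const)), fun y w hw => ?_⟩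
    change w v = M (y, 1) ⟨v, hv⟩
    rw [← hw.linearCombination_eq, ← LinearMap.comp_apply, hM, LinearMap.id_apply]
  · exact ⟨0, continuous_const, fun y w hw => hw.eq_zero_of_notMem v hv⟩

end Continuity

namespace Geometry.SimplicialComplex

variable {E : Type*} [NormedAddCommGroup E] [NormedSpace ℝ E] {K : SimplicialComplex ℝ E}
  {s t : Finset E} {y : E} {w u : E → ℝ}

theorem isBarycentricCoords_unique (hs : s ∈ K.faces) (ht : t ∈ K.faces)
    (hw : IsBarycentricCoords s y w) (hu : IsBarycentricCoords t y u) : w = u := by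
  classical
  have hy : y ∈ convexHull ℝ ((s ∩ t : Finset E) : Set E) := by
    rw [Finset.coe_inter]
    exact K.inter_subset_convexHull hs ht
      ⟨mem_convexHull_iff_exists_isBarycentricCoords.2 ⟨w, hw⟩,
        mem_convexHull_iff_exists_isBarycentricCoords.2 ⟨u, hu⟩⟩
  obtain ⟨z, hz⟩ := mem_convexHull_iff_exists_isBarycentricCoords.1 hy
  exact (hw.eq_of_affineIndependent (K.indep hs) (hz.mono Finset.inter_subset_left)).trans
    ((hz.mono Finset.inter_subset_right).eq_of_affineIndependent (K.indep ht) hu)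

noncomputable def baryCoord (K : SimplicialComplex ℝ E) (y : E) : E → ℝ :=
  open Classical in
  if h : ∃ w, ∃ s ∈ K.faces, IsBarycentricCoords s y w then h.choose else 0

theorem baryCoord_eq (hs : s ∈ K.faces) (hw : IsBarycentricCoords s y w) :
    K.baryCoord y = w := by
  have h : ∃ w, ∃ s ∈ K.faces, IsBarycentricCoords s y w := ⟨w, s, hs, hw⟩
  rw [baryCoord, dif_pos h]
  obtain ⟨t, ht, hwt⟩ := h.choose_spec
  exact isBarycentricCoords_unique ht hs hwt hw

theorem exists_isBarycentricCoords_baryCoord (hy : y ∈ K.space) :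
    ∃ s ∈ K.faces, IsBarycentricCoords s y (K.baryCoord y) := by
  obtain ⟨s, hs, hys⟩ := mem_space_iff.1 hy
  obtain ⟨w, hw⟩ := mem_convexHull_iff_exists_isBarycentricCoords.1 hys
  exact ⟨s, hs, (baryCoord_eq hs hw).symm ▸ hw⟩

theorem continuousOn_baryCoord [FiniteDimensional ℝ E] (hK : K.faces.Finite) (v : E) :
    ContinuousOn (fun y => K.baryCoord y v) K.space := by
  have : Finite K.faces := hK
  rw [space, biUnion_eq_iUnion]
  refine (locallyFinite_of_finite _).continuousOn_iUnion
    (fun s => s.1.finite_toSet.isClosed_convexHull ℝ) fun s => ?_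
  obtain ⟨f, hf, hfw⟩ := (K.indep s.2).exists_continuous_barycentricCoord v
  refine hf.continuousOn.congr fun y hy => ?_
  obtain ⟨w, hw⟩ := mem_convexHull_iff_exists_isBarycentricCoords.1 hy
  rw [baryCoord_eq s.2 hw]
  exact hfw y w hw

theorem exists_finset_forall_faces_subset (hK : K.faces.Finite) :
    ∃ T : Finset E, ∀ s ∈ K.faces, s ⊆ T := by
  classical
  exact ⟨hK.toFinset.sup id, fun s hs => Finset.le_sup (f := id) (hK.mem_toFinset.2 hs)⟩

end Geometry.SimplicialComplex

section AntipodeFreeCover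

variable {X ι κ : Type*} [TopologicalSpace X] [Neg X]

def IsAntipodeFreeCover_s17 (S : Set X) (l : ℕ) (U : ι → Set X) : Prop :=
  (∀ i, ∃ V, IsOpen V ∧ U i = V ∩ S) ∧ S ⊆ ⋃ i, U i ∧ (∀ i, ∀ x, x ∈ U i → -x ∉ U i) ∧
    ∀ x ∈ S, {i | x ∈ U i}.ncard ≤ l

theorem IsAntipodeFreeCover_s17.comp_equiv {S : Set X} {l : ℕ} {U : ι → Set X}
    (hU : IsAntipodeFreeCover_s17 S l U) (e : κ ≃ ι) : IsAntipodeFreeCover_s17 S l (U ∘ e) := by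
  obtain ⟨hopen, hcover, hanti, hmult⟩ := hU
  refine ⟨fun k => hopen (e k), ?_, fun k => hanti (e k), fun x hx => ?_⟩
  · rwa [comp_def, e.surjective.iUnion_comp U]
  · exact (ncard_preimage_of_injective_subset_range (s := {i | x ∈ U i}) e.injective
      (by simp)).trans_le (hmult x hx)

end AntipodeFreeCover

open SimplicialComplex in
theorem exists_isAntipodeFreeCover_of_mapsTo_space {E X : Type*} [NormedAddCommGroup E]
    [NormedSpace ℝ E] [FiniteDimensional ℝ E] [TopologicalSpace X] [InvolutiveNeg X]
    [ContinuousNeg X] {S : Set X} (hS : ∀ x ∈ S, -x ∈ S) {K : SimplicialComplex ℝ E}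
    (hK : K.faces.Finite) {l : ℕ} (hKl : ∀ s ∈ K.faces, s.card ≤ l) {g : X → E}
    (hg : ContinuousOn g S) (hgK : ∀ x ∈ S, g x ∈ K.space) (hne : ∀ x ∈ S, g x ≠ g (-x)) :
    ∃ (n : ℕ) (U : Fin n → Set X), IsAntipodeFreeCover_s17 S l U := by
  obtain ⟨T, hT⟩ := exists_finset_forall_faces_subset hK
  have hbc : ∀ x ∈ S, ∃ s ∈ K.faces, IsBarycentricCoords s (g x) (K.baryCoord (g x)) :=
    fun x hx => exists_isBarycentricCoords_baryCoord (hgK x hx)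
  set D : E → X → ℝ := fun v x => K.baryCoord (g x) v - K.baryCoord (g (-x)) v
  have hD : ∀ v, ContinuousOn (D v) S := fun v =>
    ((continuousOn_baryCoord hK v).comp hg hgK).sub
      ((continuousOn_baryCoord hK v).comp (hg.comp continuous_neg.continuousOn hS)
        fun x hx => hgK _ (hS x hx))
  suffices IsAntipodeFreeCover_s17 S l (fun v : T => D v ⁻¹' Ioi 0 ∩ S) from
    ⟨_, _, this.comp_equiv (Fintype.equivFin T).symm⟩
  refine ⟨fun v => continuousOn_iff'.1 (hD v) _ isOpen_Ioi, fun x hx => ?_, ?_, fun x hx => ?_⟩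
  · by_contra hcov
    simp only [mem_iUnion, not_exists] at hcov
    obtain ⟨s, hs, hw⟩ := hbc x hx
    obtain ⟨t, ht, hu⟩ := hbc (-x) (hS x hx)
    have hwT := hw.mono (hT s hs)
    have huT := hu.mono (hT t ht)
    have heq := hwT.eq_of_forall_le huT fun v hv =>
      sub_nonpos.1 (not_lt.1 fun hpos => hcov ⟨v, hv⟩ ⟨hpos, hx⟩)
    refine hne x hx ?_
    rw [← hwT.sum_smul_eq, ← huT.sum_smul_eq, heq]
  · rintro v x ⟨hx, -⟩ ⟨hnx, -⟩
    simp only [D, mem_preimage, mem_Ioi, neg_neg] at hx hnx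
    linarith
  · obtain ⟨s, hs, hw⟩ := hbc x hx
    obtain ⟨t, -, hu⟩ := hbc (-x) (hS x hx)
    have hmaps : ∀ v ∈ {v : T | x ∈ D v ⁻¹' Ioi 0 ∩ S}, (v : E) ∈ (s : Set E) := by
      rintro v ⟨hv, -⟩
      by_contra hvs
      have := hu.nonneg v
      simp only [D, mem_preimage, mem_Ioi, hw.eq_zero_of_notMem v (by simpa using hvs)] at hv
      linarith
    calc {v : T | x ∈ D v ⁻¹' Ioi 0 ∩ S}.ncard
        ≤ (s : Set E).ncard := ncard_le_ncard_of_injOn _ hmaps Subtype.val_injective.injOn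
      _ = s.card := ncard_coe_finset s
      _ ≤ l := hKl s hs

section Realization

variable {ι : Type*} [Fintype ι]

noncomputable def stdBasisEmbedding (ι : Type*) [Fintype ι] : ι ↪ EuclideanSpace ℝ ι :=
  ⟨EuclideanSpace.basisFun ι ℝ, (EuclideanSpace.basisFun ι ℝ).toBasis.injective⟩

theorem stdBasisEmbedding_apply (i : ι) :
    stdBasisEmbedding ι i = EuclideanSpace.basisFun ι ℝ i :=
  rfl

theorem affineIndependent_map_stdBasisEmbedding (t : Finset ι) :
    AffineIndependent ℝ ((↑) : t.map (stdBasisEmbedding ι) → EuclideanSpace ℝ ι) :=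
  (EuclideanSpace.basisFun ι ℝ).toBasis.linearIndependent.affineIndependent.range.mono
    (by rw [Finset.coe_map]; exact image_subset_range _ _)

theorem sum_smul_stdBasisEmbedding {t : Finset ι} {w : ι → ℝ} (hw : ∀ i ∉ t, w i = 0) :
    ∑ i ∈ t, w i • stdBasisEmbedding ι i = WithLp.toLp 2 w := by
  rw [Finset.sum_subset (Finset.subset_univ t) fun i _ hi => by rw [hw i hi, zero_smul]]
  simpa [stdBasisEmbedding_apply] using
    (EuclideanSpace.basisFun ι ℝ).sum_repr (WithLp.toLp 2 w)

noncomputable def stdRealization (𝒜 : Set (Finset ι)) (h𝒜 : IsLowerSet 𝒜) :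
    SimplicialComplex ℝ (EuclideanSpace ℝ ι) :=
  SimplicialComplex.ofErase (Finset.map (stdBasisEmbedding ι) '' 𝒜)
    (fun _ ⟨t, _, ht⟩ => ht ▸ affineIndependent_map_stdBasisEmbedding t)
    (by
      rintro _ _ hsub ⟨t, ht, rfl⟩
      obtain ⟨u, hut, rfl⟩ := Finset.subset_map_iff.1 hsub
      exact ⟨u, h𝒜 hut ht, rfl⟩)
    (by
      rintro _ ⟨t₁, -, rfl⟩ _ ⟨t₂, -, rfl⟩
      exact ((affineIndependent_map_stdBasisEmbedding Finset.univ).convexHull_inter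
        (Finset.map_subset_map.2 (Finset.subset_univ t₁))
        (Finset.map_subset_map.2 (Finset.subset_univ t₂))).symm.subset)

variable {𝒜 : Set (Finset ι)} {h𝒜 : IsLowerSet 𝒜}

theorem finite_faces_stdRealization : (stdRealization 𝒜 h𝒜).faces.Finite :=
  ((toFinite 𝒜).image _).subset sdiff_subset

theorem exists_card_eq_of_mem_faces_stdRealization {s : Finset (EuclideanSpace ℝ ι)}
    (hs : s ∈ (stdRealization 𝒜 h𝒜).faces) : ∃ t ∈ 𝒜, t.card = s.card := by
  obtain ⟨⟨t, ht, rfl⟩, -⟩ := hs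
  exact ⟨t, ht, (Finset.card_map _).symm⟩

theorem toLp_mem_space_stdRealization {t : Finset ι} (ht : t ∈ 𝒜) {w : ι → ℝ}
    (hw0 : ∀ i, 0 ≤ w i) (hwt : ∀ i ∉ t, w i = 0) (hw1 : ∑ i, w i = 1) :
    WithLp.toLp 2 w ∈ (stdRealization 𝒜 h𝒜).space := by
  have hwt1 : ∑ i ∈ t, w i = 1 := by
    rwa [Finset.sum_subset (Finset.subset_univ t) fun i _ hi => hwt i hi]
  have htne : t.Nonempty := Finset.nonempty_of_sum_ne_zero (by rw [hwt1]; exact one_ne_zero)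
  refine SimplicialComplex.mem_space_iff.2 ⟨t.map (stdBasisEmbedding ι),
    ⟨⟨t, ht, rfl⟩, by simpa using htne.ne_empty⟩, ?_⟩
  rw [← sum_smul_stdBasisEmbedding hwt, ← Finset.centerMass_eq_of_sum_1 _ _ hwt1]
  exact t.centerMass_mem_convexHull (fun i _ => hw0 i) (by rw [hwt1]; exact one_pos)
    fun i hi => Finset.mem_map_of_mem _ hi

end Realization

def nerve {X ι : Type*} (S : Set X) (U : ι → Set X) : Set (Finset ι) :=
  {t | ∃ x ∈ S, ∀ i ∈ t, x ∈ U i}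

theorem isLowerSet_nerve {X ι : Type*} {S : Set X} {U : ι → Set X} : IsLowerSet (nerve S U) :=
  fun _ _ hst ⟨x, hx, hxt⟩ => ⟨x, hx, fun i hi => hxt i (hst hi)⟩

theorem exists_mapsTo_space_of_isAntipodeFreeCover {X ι : Type*} [TopologicalSpace X]
    [NormalSpace X] [ParacompactSpace X] [Neg X] [Fintype ι] {S : Set X} (hSc : IsClosed S)
    (hS : ∀ x ∈ S, -x ∈ S) {l : ℕ} {U : ι → Set X} (hU : IsAntipodeFreeCover_s17 S l U) :
    ∃ (K : SimplicialComplex ℝ (EuclideanSpace ℝ ι)) (g : X → EuclideanSpace ℝ ι),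
      K.faces.Finite ∧ (∀ s ∈ K.faces, s.card ≤ l) ∧ ContinuousOn g S ∧
      (∀ x ∈ S, g x ∈ K.space) ∧ ∀ x ∈ S, g x ≠ g (-x) := by
  classical
  obtain ⟨hopen, hcover, hanti, hmult⟩ := hU
  choose V hVo hUV using hopen
  obtain ⟨f, hf⟩ := PartitionOfUnity.exists_isSubordinate hSc V hVo
    (hcover.trans (iUnion_mono fun i => (hUV i).trans_subset inter_subset_left))
  have hfU : ∀ x ∈ S, ∀ i, f i x ≠ 0 → x ∈ U i := fun x hx i hi =>
    (hUV i).symm ▸ ⟨hf i (subset_tsupport _ hi), hx⟩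
  refine ⟨stdRealization (nerve S U) isLowerSet_nerve, fun x => WithLp.toLp 2 fun i => f i x,
    finite_faces_stdRealization, fun s hs => ?_, ?_, fun x hx => ?_, fun x hx heq => ?_⟩
  · obtain ⟨t, ⟨x, hx, hxt⟩, hts⟩ := exists_card_eq_of_mem_faces_stdRealization hs
    calc s.card = t.card := hts.symm
      _ = (t : Set ι).ncard := (ncard_coe_finset t).symm
      _ ≤ {i | x ∈ U i}.ncard := ncard_le_ncard hxt
      _ ≤ l := hmult x hx
  · exact ((PiLp.continuous_toLp 2 _).comp
      (continuous_pi fun i => (f i).continuous)).continuousOn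
  · have hx_nerve : (Finset.univ.filter fun i => x ∈ U i) ∈ nerve S U := ⟨x, hx, by simp⟩
    refine toLp_mem_space_stdRealization hx_nerve (fun i => f.nonneg i x) (fun i hi => ?_) ?_
    · by_contra h
      exact hi (by simpa using hfU x hx i h)
    · rw [← finsum_eq_sum_of_fintype]
      exact f.sum_eq_one hx
  · obtain ⟨i, hi⟩ := f.exists_pos hx
    have hfi : f i x = f i (-x) := congrFun (congrArg WithLp.ofLp heq) i
    exact hanti i x (hfU x hx i hi.ne') (hfU _ (hS x hx) i (hfi ▸ hi.ne'))

/-- **Simonyi–Tardos equivalence.** There exists a continuous map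
`g : S^h → ‖K‖` to the geometric realization of some finite simplicial complex
`K` of dimension at most `l - 1` (every face has at most `l` vertices) with
`g x ≠ g (-x)` for all `x ∈ S^h`, if and only if the sphere `S^h` can be covered
by finitely many open sets, none containing a pair of antipodal points, such
that every point lies in at most `l` of the sets. -/
theorem simonyi_tardos_equivalence (h l : ℕ) :
    (∃ (N : ℕ) (K : Geometry.SimplicialComplex ℝ (EuclideanSpace ℝ (Fin N)))
        (g : EuclideanSpace ℝ (Fin (h + 1)) → EuclideanSpace ℝ (Fin N)),
      K.faces.Finite ∧ (∀ s ∈ K.faces, s.card ≤ l) ∧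
      ContinuousOn g (Metric.sphere 0 1) ∧
      (∀ x ∈ Metric.sphere (0 : EuclideanSpace ℝ (Fin (h + 1))) 1,
        g x ∈ K.space) ∧
      (∀ x ∈ Metric.sphere (0 : EuclideanSpace ℝ (Fin (h + 1))) 1,
        g x ≠ g (-x))) ↔
    (∃ (n : ℕ) (U : Fin n → Set (EuclideanSpace ℝ (Fin (h + 1)))),
      (∀ i, ∃ V, IsOpen V ∧ U i = V ∩ Metric.sphere 0 1) ∧
      (Metric.sphere (0 : EuclideanSpace ℝ (Fin (h + 1))) 1 ⊆ ⋃ i, U i) ∧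
      (∀ i, ∀ x, x ∈ U i → -x ∉ U i) ∧
      (∀ x ∈ Metric.sphere (0 : EuclideanSpace ℝ (Fin (h + 1))) 1,
        {i : Fin n | x ∈ U i}.ncard ≤ l)) := by
  have hS : ∀ x ∈ Metric.sphere (0 : EuclideanSpace ℝ (Fin (h + 1))) 1,
      -x ∈ Metric.sphere (0 : EuclideanSpace ℝ (Fin (h + 1))) 1 := fun x hx => by
    rwa [mem_sphere_zero_iff_norm, norm_neg, ← mem_sphere_zero_iff_norm]
  constructor
  · rintro ⟨N, K, g, hK, hKl, hg, hgK, hne⟩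
    exact exists_isAntipodeFreeCover_of_mapsTo_space hS hK hKl hg hgK hne
  · rintro ⟨n, U, hU⟩
    exact ⟨n, exists_mapsTo_space_of_isAntipodeFreeCover Metric.isClosed_sphere hS hU⟩
end
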